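/- Let X, Y be Banach spaces and G ∈ L(X,Y) with ‖G‖ = 1. Then the numerical index with respect to the adjoint dominates from below: n_{G*}(Y*, X*) ≤ n_G(X, Y). -/

import Mathlib

/-!
Numerical radii and numerical indices can only decrease when the ambient space is enlarged
isometrically: a norm-one functional on the larger space that takes the value `1` at the image of
`u` restricts to a norm-one functional taking the value `1` at `u`. The adjoint map `T ↦ T*` is a
linear isometry `L(X, Y) → L(Y*, X*)` sending `G` to `G*`, by Hahn–Banach.
-/

open NormedSpace

/-- Numerical radius of `z` with respect to the unit vector `u`. -/
noncomputable def vRad {Z : Type*} [NormedAddCommGroup Z] [NormedSpace ℝ Z] (u z : Z) : ℝ :=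
  sSup {r : ℝ | ∃ φ : StrongDual ℝ Z, ‖φ‖ = 1 ∧ φ u = 1 ∧ |φ z| = r}

/-- Numerical index of the space with respect to the unit vector `u`. -/
noncomputable def nInd {Z : Type*} [NormedAddCommGroup Z] [NormedSpace ℝ Z] (u : Z) : ℝ :=
  sInf {r : ℝ | ∃ z : Z, ‖z‖ = 1 ∧ vRad u z = r}

/-- The adjoint of a continuous linear operator between real normed spaces. -/
noncomputable def adjOp {X Y : Type*} [NormedAddCommGroup X] [NormedSpace ℝ X]
    [NormedAddCommGroup Y] [NormedSpace ℝ Y] (G : X →L[ℝ] Y) :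
    (Y →L[ℝ] ℝ) →L[ℝ] (X →L[ℝ] ℝ) :=
  (ContinuousLinearMap.compL ℝ X Y ℝ).flip G

section NumericalIndex

variable {E F : Type*} [NormedAddCommGroup E] [NormedSpace ℝ E]
  [NormedAddCommGroup F] [NormedSpace ℝ F]

lemma vRad_nonneg (u z : E) : 0 ≤ vRad u z :=
  Real.sSup_nonneg fun _ ⟨_, _, _, hr⟩ => hr ▸ abs_nonneg _

lemma abs_apply_le_vRad {φ : StrongDual ℝ E} {u : E} (hφ : ‖φ‖ = 1) (hφu : φ u = 1) (z : E) :
    |φ z| ≤ vRad u z := by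
  refine le_csSup ⟨‖z‖, ?_⟩ ⟨φ, hφ, hφu, rfl⟩
  rintro _ ⟨ψ, hψ, -, rfl⟩
  simpa [hψ] using ψ.le_opNorm z

lemma norm_eq_one_of_apply_eq_one {φ : StrongDual ℝ E} {u : E} (hφ : ‖φ‖ ≤ 1) (hu : ‖u‖ ≤ 1)
    (hφu : φ u = 1) : ‖φ‖ = 1 := by
  refine le_antisymm hφ ?_
  calc (1 : ℝ) = ‖φ u‖ := by simp [hφu]
    _ ≤ ‖φ‖ * ‖u‖ := φ.le_opNorm u
    _ ≤ ‖φ‖ := mul_le_of_le_one_right (norm_nonneg φ) hu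

lemma vRad_map_le (L : E →ₗᵢ[ℝ] F) {u : E} (hu : ‖u‖ ≤ 1) (z : E) :
    vRad (L u) (L z) ≤ vRad u z := by
  refine Real.sSup_le ?_ (vRad_nonneg u z)
  rintro _ ⟨Φ, hΦ, hΦu, rfl⟩
  have hrestrict : ‖Φ.comp L.toContinuousLinearMap‖ ≤ 1 :=
    calc _ ≤ ‖Φ‖ * ‖L.toContinuousLinearMap‖ := Φ.opNorm_comp_le _
      _ ≤ 1 := by simpa [hΦ] using L.norm_toContinuousLinearMap_le
  exact abs_apply_le_vRad (norm_eq_one_of_apply_eq_one hrestrict hu hΦu) hΦu z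

lemma nInd_map_le (L : E →ₗᵢ[ℝ] F) {u : E} (hu : ‖u‖ = 1) : nInd (L u) ≤ nInd u := by
  refine le_csInf ⟨_, u, hu, rfl⟩ ?_
  rintro _ ⟨z, hz, rfl⟩
  have hbdd : BddBelow {r : ℝ | ∃ w : F, ‖w‖ = 1 ∧ vRad (L u) w = r} :=
    ⟨0, by rintro _ ⟨w, -, rfl⟩; exact vRad_nonneg _ w⟩
  exact (csInf_le hbdd ⟨L z, by simpa using hz, rfl⟩).trans (vRad_map_le L hu.le z)

end NumericalIndex

section Adjoint

variable {X Y : Type*} [NormedAddCommGroup X] [NormedSpace ℝ X]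
  [NormedAddCommGroup Y] [NormedSpace ℝ Y]

lemma adjOp_apply (G : X →L[ℝ] Y) (φ : Y →L[ℝ] ℝ) : adjOp G φ = φ.comp G := rfl

lemma norm_adjOp (G : X →L[ℝ] Y) : ‖adjOp G‖ = ‖G‖ := by
  refine le_antisymm ?_ ?_
  · refine (adjOp G).opNorm_le_bound (norm_nonneg G) fun φ => ?_
    simpa only [adjOp_apply, mul_comm] using φ.opNorm_comp_le G
  · refine G.opNorm_le_bound (norm_nonneg (adjOp G)) fun x =>
      norm_le_dual_bound ℝ (G x) (by positivity) fun φ => ?_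
    calc ‖φ (G x)‖ = ‖adjOp G φ x‖ := rfl
      _ ≤ ‖adjOp G φ‖ * ‖x‖ := (adjOp G φ).le_opNorm x
      _ ≤ ‖adjOp G‖ * ‖φ‖ * ‖x‖ := by gcongr; exact (adjOp G).le_opNorm φ
      _ = ‖adjOp G‖ * ‖x‖ * ‖φ‖ := by ring

variable (X Y) in
noncomputable def adjOpₗᵢ : (X →L[ℝ] Y) →ₗᵢ[ℝ] ((Y →L[ℝ] ℝ) →L[ℝ] (X →L[ℝ] ℝ)) where
  toLinearMap := (ContinuousLinearMap.compL ℝ X Y ℝ).flip.toLinearMap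
  norm_map' := norm_adjOp

lemma adjOpₗᵢ_apply (G : X →L[ℝ] Y) : adjOpₗᵢ X Y G = adjOp G := rfl

end Adjoint

theorem stmt10_general {X Y : Type*} [NormedAddCommGroup X] [NormedSpace ℝ X]
    [NormedAddCommGroup Y] [NormedSpace ℝ Y]
    (G : X →L[ℝ] Y) (hG : ‖G‖ = 1) :
    nInd (adjOp G) ≤ nInd G := by
  have h := nInd_map_le (F := (Y →L[ℝ] ℝ) →L[ℝ] (X →L[ℝ] ℝ)) (adjOpₗᵢ X Y) hG
  rwa [adjOpₗᵢ_apply] at h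

theorem stmt10 {X Y : Type*} [NormedAddCommGroup X] [NormedSpace ℝ X] [CompleteSpace X]
    [NormedAddCommGroup Y] [NormedSpace ℝ Y] [CompleteSpace Y]
    (G : X →L[ℝ] Y) (hG : ‖G‖ = 1) :
    nInd (adjOp G) ≤ nInd G :=
  stmt10_general G hG
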